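/- arXiv:1611.02270 — 8 statements merged into one kernel-verified Lean document; each statement's English description precedes it below -/
import Mathlib

section
/- Let μ be a nonnegative measure on (0,∞) whose support contains at least two distinct points, and let S ⊆ ℝ be an open interval such that ∫_{(0,∞)} u²·e^{s·u} dμ(u) < ∞ for all s ∈ S and ∫_{(0,∞)} u·e^{s·u} dμ(u) > 0 for all s ∈ S. Then the function s ↦ (∫_{(0,∞)} u²·e^{s·u} dμ(u)) / (∫_{(0,∞)} u·e^{s·u} dμ(u)) is strictly increasing on S. If instead μ is a positive multiple of a point mass at u₀ > 0, this ratio is constant and equal to u₀. -/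
/-!
Write `N s = ∫ u² e^{su} dμ` and `D s = ∫ u e^{su} dμ` over `u > 0`. For `s < t` the cross
difference `N t · D s - N s · D t` is half the double integral of the symmetrized kernel
`u v (u - v) (e^{tu + sv} - e^{su + tv})`, which is positive off the diagonal because `u - v`
and `(t - s)(u - v)` have the same sign. A measure with two distinct support points gives the
off-diagonal positive mass, so `N / D` is strictly increasing. The kernel is a sum of products of
functions of one variable, so its iterated integral is computed without Fubini, and `μ` need
not be σ-finite.
-/

open MeasureTheory Set Metric Real

section SymmKernel

variable {α : Type*} [MeasurableSpace α] {ν : Measure α}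

def symmKernel (a b c d : α → ℝ) (x y : α) : ℝ :=
  a x * b y - c x * d y + (a y * b x - c y * d x)

variable {a b c d : α → ℝ}

lemma integrable_symmKernel (ha : Integrable a ν) (hb : Integrable b ν) (hc : Integrable c ν)
    (hd : Integrable d ν) (x : α) : Integrable (symmKernel a b c d x) ν := by
  unfold symmKernel
  fun_prop

lemma integral_symmKernel (ha : Integrable a ν) (hb : Integrable b ν) (hc : Integrable c ν)
    (hd : Integrable d ν) (x : α) :
    ∫ y, symmKernel a b c d x y ∂ν =
      a x * ∫ y, b y ∂ν - c x * ∫ y, d y ∂ν + ((∫ y, a y ∂ν) * b x - (∫ y, c y ∂ν) * d x) := by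
  unfold symmKernel
  rw [integral_add (by fun_prop) (by fun_prop), integral_sub (by fun_prop) (by fun_prop),
    integral_sub (by fun_prop) (by fun_prop), integral_const_mul, integral_const_mul,
    integral_mul_const, integral_mul_const]

lemma integrable_integral_symmKernel (ha : Integrable a ν) (hb : Integrable b ν)
    (hc : Integrable c ν) (hd : Integrable d ν) :
    Integrable (fun x => ∫ y, symmKernel a b c d x y ∂ν) ν := by
  simp_rw [integral_symmKernel ha hb hc hd]
  fun_prop

lemma integral_integral_symmKernel (ha : Integrable a ν) (hb : Integrable b ν)
    (hc : Integrable c ν) (hd : Integrable d ν) :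
    ∫ x, ∫ y, symmKernel a b c d x y ∂ν ∂ν =
      2 * ((∫ x, a x ∂ν) * (∫ x, b x ∂ν) - (∫ x, c x ∂ν) * ∫ x, d x ∂ν) := by
  simp_rw [integral_symmKernel ha hb hc hd]
  rw [integral_add (by fun_prop) (by fun_prop), integral_sub (by fun_prop) (by fun_prop),
    integral_sub (by fun_prop) (by fun_prop), integral_mul_const, integral_mul_const,
    integral_const_mul, integral_const_mul]
  ring

end SymmKernel

lemma integral_pos_of_ae_pos_on {α : Type*} [MeasurableSpace α] {ν : Measure α} {f : α → ℝ}
    {s : Set α} (hf : Integrable f ν) (hf0 : 0 ≤ᵐ[ν] f) (hfs : ∀ᵐ x ∂ν, x ∈ s → 0 < f x)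
    (hs : ν s ≠ 0) : 0 < ∫ x, f x ∂ν := by
  rw [integral_pos_iff_support_of_nonneg_ae hf0 hf]
  refine (pos_iff_ne_zero.2 hs).trans_le (measure_mono_ae ?_)
  filter_upwards [hfs] with x hx hxs
  exact (hx hxs).ne'

lemma restrict_compl_singleton_ne_zero {X : Type*} [MetricSpace X] [MeasurableSpace X]
    {μ : Measure X} {s : Set X} {a u : X} (ha : ∀ ε > 0, μ (ball a ε ∩ s) ≠ 0) (hu : u ≠ a) :
    μ.restrict s {u}ᶜ ≠ 0 := by
  have hball : ball a (dist u a) ⊆ {u}ᶜ := by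
    rintro y hy rfl
    exact (mem_ball.1 hy).false
  refine ne_bot_of_le_ne_bot (ha _ (dist_pos.2 hu)) ?_
  exact (measure_mono (inter_subset_inter_left s hball)).trans (Measure.le_restrict_apply _ _)

lemma sub_mul_exp_sub_exp_pos {s t x y : ℝ} (hst : s < t) (hxy : x ≠ y) :
    0 < (x - y) * (exp (t * x + s * y) - exp (s * x + t * y)) := by
  rcases hxy.lt_or_gt with h | h
  · exact mul_pos_of_neg_of_neg (sub_neg.2 h) (sub_neg.2 (exp_lt_exp.2 (by nlinarith)))
  · exact mul_pos (sub_pos.2 h) (sub_pos.2 (exp_lt_exp.2 (by nlinarith)))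

noncomputable abbrev momentKernel (s t : ℝ) : ℝ → ℝ → ℝ :=
  symmKernel (fun u => u ^ 2 * exp (t * u)) (fun u => u * exp (s * u))
    (fun u => u ^ 2 * exp (s * u)) (fun u => u * exp (t * u))

lemma momentKernel_eq (s t x y : ℝ) :
    momentKernel s t x y = x * y * ((x - y) * (exp (t * x + s * y) - exp (s * x + t * y))) := by
  simp only [symmKernel, exp_add]
  ring

lemma momentKernel_pos {s t x y : ℝ} (hst : s < t) (hx : 0 < x) (hy : 0 < y) (hxy : x ≠ y) :
    0 < momentKernel s t x y := by
  rw [momentKernel_eq]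
  exact mul_pos (mul_pos hx hy) (sub_mul_exp_sub_exp_pos hst hxy)

lemma momentKernel_nonneg {s t x y : ℝ} (hst : s < t) (hx : 0 < x) (hy : 0 < y) :
    0 ≤ momentKernel s t x y := by
  rcases eq_or_ne x y with rfl | hxy
  · simp [momentKernel_eq]
  · exact (momentKernel_pos hst hx hy hxy).le

theorem moment_cross_lt (μ : Measure ℝ) {s t : ℝ} (hst : s < t) {u₁ u₂ : ℝ} (h12 : u₁ ≠ u₂)
    (hu₁ : ∀ ε > (0 : ℝ), μ (ball u₁ ε ∩ Ioi 0) ≠ 0)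
    (hu₂ : ∀ ε > (0 : ℝ), μ (ball u₂ ε ∩ Ioi 0) ≠ 0)
    (hNs : IntegrableOn (fun u => u ^ 2 * exp (s * u)) (Ioi 0) μ)
    (hNt : IntegrableOn (fun u => u ^ 2 * exp (t * u)) (Ioi 0) μ)
    (hDs : IntegrableOn (fun u => u * exp (s * u)) (Ioi 0) μ)
    (hDt : IntegrableOn (fun u => u * exp (t * u)) (Ioi 0) μ) :
    (∫ u in Ioi 0, u ^ 2 * exp (s * u) ∂μ) * (∫ u in Ioi 0, u * exp (t * u) ∂μ) <
      (∫ u in Ioi 0, u ^ 2 * exp (t * u) ∂μ) * ∫ u in Ioi 0, u * exp (s * u) ∂μ := by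
  set ν := μ.restrict (Ioi 0)
  have hcompl : ∀ x, ν {x}ᶜ ≠ 0 := fun x => by
    rcases eq_or_ne x u₁ with rfl | hx
    · exact restrict_compl_singleton_ne_zero hu₂ h12
    · exact restrict_compl_singleton_ne_zero hu₁ hx
  have hpos_ae : ∀ᵐ y ∂ν, 0 < y := ae_restrict_mem measurableSet_Ioi
  have hinner : ∀ x > 0, 0 < ∫ y, momentKernel s t x y ∂ν := fun x hx => by
    refine integral_pos_of_ae_pos_on (integrable_symmKernel hNt hDs hNs hDt x) ?_ ?_ (hcompl x)
    · filter_upwards [hpos_ae] with y hy using momentKernel_nonneg hst hx hy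
    · filter_upwards [hpos_ae] with y hy hyx using momentKernel_pos hst hx hy (Ne.symm hyx)
  have houter : 0 < ∫ x, ∫ y, momentKernel s t x y ∂ν ∂ν := by
    refine integral_pos_of_ae_pos_on (integrable_integral_symmKernel hNt hDs hNs hDt)
      ?_ ?_ (ne_bot_of_le_ne_bot (hcompl 0) (measure_mono (subset_univ _)))
    · filter_upwards [hpos_ae] with x hx using (hinner x hx).le
    · filter_upwards [hpos_ae] with x hx _ using hinner x hx
  rw [integral_integral_symmKernel hNt hDs hNs hDt] at houter
  linarith

lemma setIntegral_smul_dirac_of_mem {α : Type*} [MeasurableSpace α] [MeasurableSingletonClass α]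
    (f : α → ℝ) (c : NNReal) {a : α} {s : Set α} (ha : a ∈ s) :
    ∫ x in s, f x ∂(c • Measure.dirac a) = c * f a := by
  classical
  rw [Measure.restrict_smul, integral_smul_nnreal_measure, setIntegral_dirac, if_pos ha,
    NNReal.smul_def, smul_eq_mul]

theorem stmt5_general (μ : Measure ℝ) (S : Set ℝ)
    (hsupp : ∃ u₁ u₂ : ℝ, 0 < u₁ ∧ 0 < u₂ ∧ u₁ ≠ u₂ ∧
      (∀ ε > (0 : ℝ), μ (Metric.ball u₁ ε ∩ Set.Ioi 0) ≠ 0) ∧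
      (∀ ε > (0 : ℝ), μ (Metric.ball u₂ ε ∩ Set.Ioi 0) ≠ 0))
    (hint2 : ∀ s ∈ S, IntegrableOn (fun u => u ^ 2 * Real.exp (s * u)) (Set.Ioi 0) μ)
    (hpos : ∀ s ∈ S, 0 < ∫ u in Set.Ioi (0 : ℝ), u * Real.exp (s * u) ∂μ) :
    StrictMonoOn (fun s => (∫ u in Set.Ioi (0 : ℝ), u ^ 2 * Real.exp (s * u) ∂μ) /
      (∫ u in Set.Ioi (0 : ℝ), u * Real.exp (s * u) ∂μ)) S ∧
    ∀ (c : NNReal) (u₀ : ℝ), 0 < c → 0 < u₀ → ∀ s : ℝ,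
      (∫ u in Set.Ioi (0 : ℝ), u ^ 2 * Real.exp (s * u) ∂(c • Measure.dirac u₀)) /
      (∫ u in Set.Ioi (0 : ℝ), u * Real.exp (s * u) ∂(c • Measure.dirac u₀)) = u₀ := by
  obtain ⟨u₁, u₂, -, -, h12, hu₁, hu₂⟩ := hsupp
  have hint1 : ∀ s ∈ S, IntegrableOn (fun u => u * exp (s * u)) (Ioi 0) μ := fun s hs =>
    .of_integral_ne_zero (hpos s hs).ne'
  refine ⟨fun s hs t ht hst => ?_, fun c u₀ hc hu₀ s => ?_⟩
  · rw [div_lt_div_iff₀ (hpos s hs) (hpos t ht)]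
    exact moment_cross_lt μ hst h12 hu₁ hu₂ (hint2 s hs) (hint2 t ht) (hint1 s hs) (hint1 t ht)
  · rw [setIntegral_smul_dirac_of_mem _ _ (mem_Ioi.2 hu₀),
      setIntegral_smul_dirac_of_mem _ _ (mem_Ioi.2 hu₀)]
    field_simp

/-- **Monotonicity of the pass-through rate (core moment-ratio statement).**
If `μ` is a nonnegative measure on `(0,∞)` whose support contains two distinct points, and
`S` is an open interval on which `∫ u² e^{su} dμ < ∞` and `∫ u e^{su} dμ > 0`, then
`s ↦ (∫ u² e^{su} dμ)/(∫ u e^{su} dμ)` is strictly increasing on `S`.  If instead `μ` is a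
positive multiple of a point mass at `u₀ > 0`, the ratio is constant, equal to `u₀`. -/
theorem stmt5 (μ : Measure ℝ) (S : Set ℝ) (hSopen : IsOpen S) (hSconn : S.OrdConnected)
    (hsupp : ∃ u₁ u₂ : ℝ, 0 < u₁ ∧ 0 < u₂ ∧ u₁ ≠ u₂ ∧
      (∀ ε > (0 : ℝ), μ (Metric.ball u₁ ε ∩ Set.Ioi 0) ≠ 0) ∧
      (∀ ε > (0 : ℝ), μ (Metric.ball u₂ ε ∩ Set.Ioi 0) ≠ 0))
    (hint2 : ∀ s ∈ S, IntegrableOn (fun u => u ^ 2 * Real.exp (s * u)) (Set.Ioi 0) μ)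
    (hpos : ∀ s ∈ S, 0 < ∫ u in Set.Ioi (0 : ℝ), u * Real.exp (s * u) ∂μ) :
    StrictMonoOn (fun s => (∫ u in Set.Ioi (0 : ℝ), u ^ 2 * Real.exp (s * u) ∂μ) /
      (∫ u in Set.Ioi (0 : ℝ), u * Real.exp (s * u) ∂μ)) S ∧
    ∀ (c : NNReal) (u₀ : ℝ), 0 < c → 0 < u₀ → ∀ s : ℝ,
      (∫ u in Set.Ioi (0 : ℝ), u ^ 2 * Real.exp (s * u) ∂(c • Measure.dirac u₀)) /
      (∫ u in Set.Ioi (0 : ℝ), u * Real.exp (s * u) ∂(c • Measure.dirac u₀)) = u₀ :=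
  stmt5_general μ S hsupp hint2 hpos
end

section
/- Let β > 0 and μ ∈ ℝ, and define the logistic inverse demand P(q) = μ − β·log(q/(1−q)) for q ∈ (0,1). Then the consumer surplus CS(q) := ∫₀^q P(x) dx − q·P(q) equals −β·log(1 − q) for all q ∈ (0,1), and the function f : (−∞, 0) → ℝ defined by f(s) = CS(e^s) = −β·log(1 − e^s) has nonnegative derivatives of every order: f⁽ⁿ⁾(s) ≥ 0 for all n ∈ ℕ and all s < 0. -/
/-!
Since `log (q / (1 - q)) = log q - log (1 - q)` holds for every real `q` (also with Lean's
`log 0 = 0`), the consumer surplus is computed from `∫ log = x log x - x`.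

For complete monotonicity put `v = eˢ / (1 - eˢ)`. Then `f' = β v` and `v' = v² + v`, so by
the chain rule every derivative `f⁽ⁿ⁺¹⁾` is a polynomial in `v` obtained from `β X` by
iterating `p ↦ p' · (X² + X)`. This operation preserves nonnegativity of coefficients, and
`v ≥ 0` for `s < 0`.
-/

/-- Logistic-distribution inverse demand `P(q) = μ - β·log(q/(1-q))`. -/
noncomputable def logisticP (β μ : ℝ) : ℝ → ℝ := fun q => μ - β * Real.log (q / (1 - q))

open Real Set Polynomial

section NonnegCoeff

variable {R : Type*} [CommSemiring R] [PartialOrder R] [IsOrderedRing R] {p q : R[X]}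

lemma Polynomial.coeff_mul_nonneg (hp : ∀ k, 0 ≤ p.coeff k) (hq : ∀ k, 0 ≤ q.coeff k) (k : ℕ) :
    0 ≤ (p * q).coeff k := by
  rw [coeff_mul]
  exact Finset.sum_nonneg fun _ _ => mul_nonneg (hp _) (hq _)

lemma Polynomial.coeff_derivative_nonneg (hp : ∀ k, 0 ≤ p.coeff k) (k : ℕ) :
    0 ≤ (derivative p).coeff k := by
  rw [coeff_derivative]
  exact mul_nonneg (hp _) (add_nonneg (Nat.cast_nonneg k) zero_le_one)

lemma Polynomial.eval_nonneg_of_coeff_nonneg (hp : ∀ k, 0 ≤ p.coeff k) {x : R} (hx : 0 ≤ x) :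
    0 ≤ p.eval x := by
  rw [eval_eq_sum_range]
  exact Finset.sum_nonneg fun i _ => mul_nonneg (hp i) (pow_nonneg hx i)

lemma Polynomial.coeff_iterate_derivative_mul_nonneg (hp : ∀ k, 0 ≤ p.coeff k)
    (hq : ∀ k, 0 ≤ q.coeff k) (n k : ℕ) :
    0 ≤ ((fun r => derivative r * q)^[n] p).coeff k := by
  induction n generalizing k with
  | zero => exact hp k
  | succ n ih =>
    rw [Function.iterate_succ_apply']
    exact coeff_mul_nonneg (coeff_derivative_nonneg ih) hq k

end NonnegCoeff

lemma iteratedDeriv_succ_eq_eval_iterate {𝕜 : Type*} [NontriviallyNormedField 𝕜] {U : Set 𝕜}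
    (hU : IsOpen U) {g v : 𝕜 → 𝕜} {p Q : 𝕜[X]}
    (hg : ∀ x ∈ U, HasDerivAt g (p.eval (v x)) x) (hv : ∀ x ∈ U, HasDerivAt v (Q.eval (v x)) x)
    (n : ℕ) {x : 𝕜} (hx : x ∈ U) :
    iteratedDeriv (n + 1) g x = ((fun r => derivative r * Q)^[n] p).eval (v x) := by
  induction n generalizing x with
  | zero => simpa using (hg x hx).deriv
  | succ n ih =>
    have h_eq : iteratedDeriv (n + 1) g =ᶠ[nhds x]
        fun y => ((fun r => derivative r * Q)^[n] p).eval (v y) :=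
      Filter.eventually_of_mem (hU.mem_nhds hx) fun y hy => ih hy
    rw [iteratedDeriv_succ, h_eq.deriv_eq, Function.iterate_succ_apply', eval_mul]
    exact ((Polynomial.hasDerivAt _ _).comp x (hv x hx)).deriv

lemma logisticP_eq (β μ x : ℝ) : logisticP β μ x = μ - β * (log x - log (1 - x)) := by
  unfold logisticP
  rcases eq_or_ne x 0 with rfl | hx0
  · simp
  rcases eq_or_ne x 1 with rfl | hx1
  · simp
  rw [log_div hx0 (sub_ne_zero.2 hx1.symm)]

lemma integral_log_one_sub (q : ℝ) :
    ∫ x in (0 : ℝ)..q, log (1 - x) = -(1 - q) * log (1 - q) - q := by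
  rw [intervalIntegral.integral_comp_sub_left (fun x => log x), integral_log]
  simp only [sub_zero, log_one, mul_zero]
  ring

lemma integral_logisticP_sub_mul_logisticP (β μ q : ℝ) :
    (∫ x in (0 : ℝ)..q, logisticP β μ x) - q * logisticP β μ q = -β * log (1 - q) := by
  have h_log_one_sub : IntervalIntegrable (fun x => log (1 - x)) MeasureTheory.volume 0 q := by
    simpa using (intervalIntegral.intervalIntegrable_log' (a := 1) (b := 1 - q)).comp_sub_left 1
  simp only [logisticP_eq]
  rw [intervalIntegral.integral_sub intervalIntegrable_const
      ((intervalIntegral.intervalIntegrable_log'.sub h_log_one_sub).const_mul β),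
    intervalIntegral.integral_const_mul,
    intervalIntegral.integral_sub intervalIntegral.intervalIntegrable_log' h_log_one_sub,
    integral_log, integral_log_one_sub]
  simp only [intervalIntegral.integral_const, smul_eq_mul, log_zero, mul_zero]
  ring

lemma one_sub_exp_ne_zero {s : ℝ} (hs : s ≠ 0) : 1 - exp s ≠ 0 :=
  sub_ne_zero.2 fun h => hs (exp_eq_one_iff s |>.1 h.symm)

lemma hasDerivAt_exp_div_one_sub_exp {s : ℝ} (hs : s ≠ 0) :
    HasDerivAt (fun t => exp t / (1 - exp t))
      ((exp s / (1 - exp s)) ^ 2 + exp s / (1 - exp s)) s := by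
  refine ((hasDerivAt_exp s).div ((hasDerivAt_exp s).const_sub 1)
    (one_sub_exp_ne_zero hs)).congr_deriv ?_
  field_simp [one_sub_exp_ne_zero hs]
  ring

lemma hasDerivAt_neg_mul_log_one_sub_exp (β : ℝ) {s : ℝ} (hs : s ≠ 0) :
    HasDerivAt (fun t => -β * log (1 - exp t)) (β * (exp s / (1 - exp s))) s := by
  refine ((((hasDerivAt_exp s).const_sub 1).log (one_sub_exp_ne_zero hs)).const_mul
    (-β)).congr_deriv ?_
  ring

/-- **Complete monotonicity for the logistic demand specification.**  For logistic inverse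
demand, the consumer surplus `CS(q) = ∫₀^q P - q·P(q)` equals `-β·log(1-q)` on `(0,1)`, and
`f(s) = CS(e^s) = -β·log(1-e^s)` has nonnegative derivatives of every order on `(-∞,0)`. -/
theorem stmt7 (β μ : ℝ) (hβ : 0 < β) :
    (∀ q ∈ Set.Ioo (0 : ℝ) 1,
      (∫ x in (0 : ℝ)..q, logisticP β μ x) - q * logisticP β μ q = -β * Real.log (1 - q)) ∧
    (∀ (n : ℕ), ∀ s < (0 : ℝ),
      0 ≤ iteratedDeriv n (fun s => -β * Real.log (1 - Real.exp s)) s) := by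
  refine ⟨fun q _ => integral_logisticP_sub_mul_logisticP β μ q, fun n s hs => ?_⟩
  have h_exp_lt_one : exp s < 1 := exp_lt_one_iff.2 hs
  cases n with
  | zero =>
    have h_log_nonpos : log (1 - exp s) ≤ 0 := log_nonpos (by linarith) (by linarith [exp_pos s])
    simpa using mul_nonneg hβ.le (neg_nonneg.2 h_log_nonpos)
  | succ n =>
    rw [iteratedDeriv_succ_eq_eval_iterate (p := C β * X) (Q := X ^ 2 + X) isOpen_Iio
      (fun t ht => by simpa using hasDerivAt_neg_mul_log_one_sub_exp β (ne_of_lt ht))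
      (fun t ht => by simpa using hasDerivAt_exp_div_one_sub_exp (ne_of_lt ht)) n hs]
    refine eval_nonneg_of_coeff_nonneg (coeff_iterate_derivative_mul_nonneg ?_ ?_ n)
      (div_nonneg (exp_pos s).le (by linarith))
    · intro k
      rw [coeff_C_mul_X]
      split_ifs <;> linarith
    · intro k
      rw [coeff_add, coeff_X_pow, coeff_X]
      split_ifs <;> norm_num
end

section
/- Let a > 0, c > 0, and b ∈ (0,1), and define the constant-elasticity inverse demand P(q) = a·q^{−b} for q > 0. Then the profit π(q) = q·P(q) − c·q attains its unique maximum over q > 0 at q* = (a·(1−b)/c)^{1/b}. At q*, the producer surplus PS := π(q*) satisfies PS/q* = c·b/(1−b), the consumer surplus CS := ∫₀^{q*} P(x) dx − q*·P(q*) satisfies CS/q* = c·b/(1−b)², and the appropriability ratio satisfies PS/(PS + CS) = (1−b)/(2−b), which is independent of the marginal cost c. -/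
/-!
Revenue is `q · a q^{-b} = a q^{1-b}`, a strictly concave function of `q`. At
`q* = (a(1-b)/c)^{1/b}` the first-order condition `a q*^{-b} = c/(1-b)` holds (price is
marginal cost times the markup `1/(1-b)`), so by the strict Bernoulli inequality profit lies
strictly below its tangent line at `q*`, which is flat. Since `∫₀^q a x^{-b} dx = a q^{1-b}/(1-b)`,
consumer surplus is revenue times `b/(1-b)`, and producer surplus is `q*` times the markup
`c/(1-b) - c`; both are multiples of `c q*`, so their ratio does not depend on `c`.
-/

open Real

lemma mul_rpow_neg_eq_rpow_one_sub {x : ℝ} (hx : 0 < x) (b : ℝ) : x * x ^ (-b) = x ^ (1 - b) := by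
  rw [sub_eq_add_neg, rpow_add hx, rpow_one]

lemma rpow_lt_tangent_line {p x y : ℝ} (hp0 : 0 < p) (hp1 : p < 1) (hx : 0 < x) (hy : 0 < y)
    (hxy : x ≠ y) : x ^ p < y ^ p * (1 + p * (x / y - 1)) := by
  have hs : -1 ≤ x / y - 1 := by linarith [div_pos hx hy]
  have hs' : x / y - 1 ≠ 0 := by rwa [sub_ne_zero, ne_eq, div_eq_one_iff_eq hy.ne']
  have bernoulli := rpow_one_add_lt_one_add_mul_self hs hs' hp0 hp1
  rwa [add_sub_cancel, div_rpow hx.le hy.le, div_lt_iff₀' (rpow_pos_of_pos hy p)] at bernoulli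

lemma profit_lt_of_price_eq_markup {a b c qs q : ℝ} (ha : 0 < a) (hb0 : 0 < b) (hb1 : b < 1)
    (hqs : 0 < qs) (hprice : a * qs ^ (-b) = c / (1 - b)) (hq : 0 < q) (hne : q ≠ qs) :
    q * (a * q ^ (-b)) - c * q < qs * (a * qs ^ (-b)) - c * qs := by
  have hb : 1 - b ≠ 0 := by linarith
  have hrevenue : a * qs ^ (1 - b) = qs * (c / (1 - b)) := by
    rw [← mul_rpow_neg_eq_rpow_one_sub hqs, mul_left_comm, hprice]
  calc q * (a * q ^ (-b)) - c * q = a * q ^ (1 - b) - c * q := by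
        rw [mul_left_comm, mul_rpow_neg_eq_rpow_one_sub hq]
    _ < a * (qs ^ (1 - b) * (1 + (1 - b) * (q / qs - 1))) - c * q := by
        gcongr
        exact rpow_lt_tangent_line (by linarith) (by linarith) hq hqs hne
    _ = qs * (c / (1 - b)) * (1 + (1 - b) * (q / qs - 1)) - c * q := by
        rw [← hrevenue]; ring
    _ = qs * (a * qs ^ (-b)) - c * qs := by
        rw [hprice]; field_simp; ring

lemma integral_const_mul_rpow_neg_sub_revenue {a b q : ℝ} (hb1 : b < 1) (hq : 0 < q) :
    (∫ x in (0 : ℝ)..q, a * x ^ (-b)) - q * (a * q ^ (-b)) = q * (a * q ^ (-b)) * (b / (1 - b)) := by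
  have hb : 1 - b ≠ 0 := by linarith
  rw [intervalIntegral.integral_const_mul, integral_rpow (Or.inl (by linarith)),
    zero_rpow (by linarith),
    mul_left_comm, mul_rpow_neg_eq_rpow_one_sub hq, neg_add_eq_sub]
  field_simp
  ring

/-- **Constant-elasticity benchmark: the appropriability ratio is cost-independent.**
For inverse demand `P(q) = a·q^{-b}` with `0 < b < 1` and constant marginal cost `c > 0`,
profit `q·P(q) - c·q` has unique maximizer `q* = (a(1-b)/c)^{1/b}`; there
`PS/q* = c·b/(1-b)`, `CS/q* = c·b/(1-b)²`, and `PS/(PS+CS) = (1-b)/(2-b)`. -/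
theorem stmt8 (a c b : ℝ) (ha : 0 < a) (hc : 0 < c) (hb0 : 0 < b) (hb1 : b < 1)
    (qs : ℝ) (hqs : qs = (a * (1 - b) / c) ^ ((1 : ℝ) / b)) :
    0 < qs ∧
    (∀ q > (0 : ℝ), q ≠ qs →
      q * (a * q ^ (-b)) - c * q < qs * (a * qs ^ (-b)) - c * qs) ∧
    (qs * (a * qs ^ (-b)) - c * qs) / qs = c * b / (1 - b) ∧
    ((∫ x in (0 : ℝ)..qs, a * x ^ (-b)) - qs * (a * qs ^ (-b))) / qs = c * b / (1 - b) ^ 2 ∧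
    (qs * (a * qs ^ (-b)) - c * qs) /
        ((qs * (a * qs ^ (-b)) - c * qs) +
          ((∫ x in (0 : ℝ)..qs, a * x ^ (-b)) - qs * (a * qs ^ (-b)))) =
      (1 - b) / (2 - b) := by
  have hb : 0 < 1 - b := by linarith
  have hq0 : 0 < qs := hqs ▸ rpow_pos_of_pos (by positivity) _
  have hprice : a * qs ^ (-b) = c / (1 - b) := by
    rw [rpow_neg hq0.le, hqs, ← rpow_mul (by positivity), one_div_mul_cancel hb0.ne', rpow_one]
    field_simp
  have hPS : qs * (a * qs ^ (-b)) - c * qs = qs * (c * b / (1 - b)) := by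
    rw [hprice]; field_simp; ring
  have hCS : (∫ x in (0 : ℝ)..qs, a * x ^ (-b)) - qs * (a * qs ^ (-b)) =
      qs * (c * b / (1 - b) ^ 2) := by
    rw [integral_const_mul_rpow_neg_sub_revenue hb1 hq0, hprice]; field_simp
  refine ⟨hq0, fun q hq hne => profit_lt_of_price_eq_markup ha hb0 hb1 hq0 hprice hq hne,
    ?_, ?_, ?_⟩
  · rw [hPS]; field_simp
  · rw [hCS]; field_simp
  · have h2b : 2 - b ≠ 0 := by linarith
    rw [hPS, hCS]; field_simp; ring
end

section
/- Let m > 0, b ∈ (0,1), q₀ > 0, and let a₊, a₋ ∈ ℝ with a₋ = 1 − a₊ and a₊ > 0. Define the inverse demand P(q) = m − m·a₋·(q/q₀)^{−b} − m·a₊·(q/q₀)^{b} for q > 0, and set a_{1,−} = (1−b)·a₋ and a_{1,+} = (1+b)·a₊. Let c ∈ ℝ satisfy (1 − c/m)² ≥ 4·a_{1,−}·a_{1,+}, and define x = (1 − c/m + √((1 − c/m)² − 4·a_{1,−}·a_{1,+})) / (2·a_{1,+}). If x > 0, then q = q₀·x^{1/b} satisfies the monopolist's first-order condition P(q) + q·P′(q)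 = c. -/
/-! Put `x = (q/q₀)^b`. Since `q · d/dq (q/q₀)^r = r (q/q₀)^r`, marginal revenue is
`P(q) + q P'(q) = m - m a₁₋ x⁻¹ - m a₁₊ x`, so the first-order condition `= c` is, after
multiplying by `x/m`, the quadratic `a₁₊ x² - (1 - c/m) x + a₁₋ = 0`, of which the given `x` is
the root furnished by the quadratic formula. -/

open Real

theorem quadratic_eq_zero_of_eq_root {a b c x : ℝ} (ha : a ≠ 0) (hd : 0 ≤ discrim a b c)
    (hx : x = (-b + √(discrim a b c)) / (2 * a)) : a * (x * x) + b * x + c = 0 :=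
  (quadratic_eq_zero_iff ha (mul_self_sqrt hd).symm x).2 (Or.inl hx)

theorem hasDerivAt_div_const_rpow {q₀ q : ℝ} (r : ℝ) (hq : q ≠ 0) (hq₀ : q₀ ≠ 0) :
    HasDerivAt (fun q => (q / q₀) ^ r) (r * (q / q₀) ^ r / q) q := by
  have hu : q / q₀ ≠ 0 := div_ne_zero hq hq₀
  refine (((hasDerivAt_id' q).div_const q₀).rpow_const (p := r) (Or.inl hu)).congr_deriv ?_
  rw [rpow_sub_one hu]
  field_simp

noncomputable def quadraticDemand (m an ap b q₀ : ℝ) (q : ℝ) : ℝ :=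
  m - m * an * (q / q₀) ^ (-b) - m * ap * (q / q₀) ^ b

theorem quadraticDemand_add_mul_deriv {m an ap b q₀ q : ℝ} (hq : q ≠ 0) (hq₀ : q₀ ≠ 0) :
    quadraticDemand m an ap b q₀ q + q * deriv (quadraticDemand m an ap b q₀) q =
      m - m * ((1 - b) * an) * (q / q₀) ^ (-b) - m * ((1 + b) * ap) * (q / q₀) ^ b := by
  have hP : HasDerivAt (quadraticDemand m an ap b q₀)
      (-(m * an * (-b * (q / q₀) ^ (-b) / q)) - m * ap * (b * (q / q₀) ^ b / q)) q :=
    ((hasDerivAt_const q m).sub ((hasDerivAt_div_const_rpow (-b) hq hq₀).const_mul (m * an))).sub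
      ((hasDerivAt_div_const_rpow b hq hq₀).const_mul (m * ap)) |>.congr_deriv (by ring)
  rw [hP.deriv, quadraticDemand]
  field_simp
  ring

theorem sub_sub_eq_of_quadratic {m c a₁ a₂ x : ℝ} (hm : m ≠ 0) (hx : x ≠ 0)
    (hquad : a₂ * (x * x) + -(1 - c / m) * x + a₁ = 0) :
    m - m * a₁ * x⁻¹ - m * a₂ * x = c := by
  field_simp at hquad ⊢
  linear_combination -hquad

theorem stmt9_general (m b q₀ ap an c : ℝ) (hm : 0 < m) (hb0 : 0 < b)
    (hq₀ : 0 < q₀) (hap : 0 < ap)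
    (a1n a1p : ℝ) (ha1n : a1n = (1 - b) * an) (ha1p : a1p = (1 + b) * ap)
    (hdisc : (1 - c / m) ^ 2 ≥ 4 * a1n * a1p)
    (x : ℝ) (hx : x = (1 - c / m + Real.sqrt ((1 - c / m) ^ 2 - 4 * a1n * a1p)) / (2 * a1p))
    (hxpos : 0 < x)
    (q : ℝ) (hq : q = q₀ * x ^ ((1 : ℝ) / b)) :
    (fun q => m - m * an * (q / q₀) ^ (-b) - m * ap * (q / q₀) ^ b) q +
      q * deriv (fun q => m - m * an * (q / q₀) ^ (-b) - m * ap * (q / q₀) ^ b) q = c := by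
  have hdiscrim : discrim a1p (-(1 - c / m)) a1n = (1 - c / m) ^ 2 - 4 * a1n * a1p := by
    rw [discrim]; ring
  have hquad : a1p * (x * x) + -(1 - c / m) * x + a1n = 0 :=
    quadratic_eq_zero_of_eq_root (by rw [ha1p]; positivity) (by rw [hdiscrim]; linarith)
      (by rw [hdiscrim, neg_neg]; exact hx)
  have hu : q / q₀ = x ^ (1 / b) := by rw [hq]; field_simp
  have hux : (q / q₀) ^ b = x := by rw [hu, one_div, rpow_inv_rpow hxpos.le hb0.ne']
  have hqpos : 0 < q := by rw [hq]; positivity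
  change quadraticDemand m an ap b q₀ q + q * deriv (quadraticDemand m an ap b q₀) q = c
  rw [quadraticDemand_add_mul_deriv hqpos.ne' hq₀.ne', ← ha1n, ← ha1p,
    rpow_neg (div_pos hqpos hq₀).le, hux]
  exact sub_sub_eq_of_quadratic hm.ne' hxpos.ne' hquad

/-- **Closed-form solution of the first-order condition for the quadratically tractable
demand form** `P(q) = m - m·a₋·(q/q₀)^{-b} - m·a₊·(q/q₀)^{b}` with `a₋ = 1 - a₊`:
if `(1 - c/m)² ≥ 4·a₁₋·a₁₊` where `a₁₋ = (1-b)a₋`, `a₁₊ = (1+b)a₊`, and the quadratic-formula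
root `x = (1 - c/m + √((1-c/m)² - 4a₁₋a₁₊))/(2a₁₊)` is positive, then `q = q₀·x^{1/b}`
satisfies `P(q) + q·P'(q) = c`. -/
theorem stmt9 (m b q₀ ap an c : ℝ) (hm : 0 < m) (hb0 : 0 < b) (hb1 : b < 1)
    (hq₀ : 0 < q₀) (hap : 0 < ap) (han : an = 1 - ap)
    (a1n a1p : ℝ) (ha1n : a1n = (1 - b) * an) (ha1p : a1p = (1 + b) * ap)
    (hdisc : (1 - c / m) ^ 2 ≥ 4 * a1n * a1p)
    (x : ℝ) (hx : x = (1 - c / m + Real.sqrt ((1 - c / m) ^ 2 - 4 * a1n * a1p)) / (2 * a1p))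
    (hxpos : 0 < x)
    (q : ℝ) (hq : q = q₀ * x ^ ((1 : ℝ) / b)) :
    (fun q => m - m * an * (q / q₀) ^ (-b) - m * ap * (q / q₀) ^ b) q +
      q * deriv (fun q => m - m * an * (q / q₀) ^ (-b) - m * ap * (q / q₀) ^ b) q = c :=
  stmt9_general m b q₀ ap an c hm hb0 hq₀ hap a1n a1p ha1n ha1p hdisc x hx hxpos q hq
end

section
/- Let κ_R, κ_LT, w, τ, MC > 0 with MC ≤ κ_R²/(4·w·τ·κ_LT), and define q_f = ((κ_R + √(κ_R² − 4·τ·MC·κ_LT·w)) / (2·τ·MC))⁵ and the profit π(q) = (5/4)·κ_R·q^{4/5} − τ·MC·q − (5/3)·w·κ_LT·q^{3/5} for q > 0. Then π(q_f) = (1/(192·MC⁴·τ⁴))·(κ_R + √(κ_R² − 4·MC·w·τ·κ_LT))³·(−16·MC·w·τ·κ_LT + 3·κ_R·(κ_R + √(κ_R² − 4·MC·w·τ·κ_LT))), and π(q_f) > 0 if and only if MC < 15·κ_R²/(64·w·τ·κ_LT). -/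
/-!
Writing `q = x⁵`, the first-order condition for the export quantity becomes the quadratic
`τ·MC·x² - κ_R·x + w·κ_LT = 0`, and `q_f` is the fifth power of its larger root `x`.
On that root `τ·MC·x⁵ = x³(κ_R·x - w·κ_LT)`, so the profit collapses to `x³(3κ_R·x - 8w·κ_LT)/12`;
it is positive iff `3κ_R(κ_R + √(κ_R² - 4τ·MC·w·κ_LT)) > 16τ·MC·w·κ_LT`, and squaring this
turns the condition into `64·τ·MC·w·κ_LT < 15κ_R²`.
-/

open Real

lemma rpow_pow_eq_pow_of_mul_eq {x r : ℝ} {n m : ℕ} (hx : 0 ≤ x) (h : (n : ℝ) * r = m) :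
    (x ^ n) ^ r = x ^ m := by
  rw [← rpow_natCast x n, ← rpow_mul hx, h, rpow_natCast]

lemma quadratic_larger_root_eq_zero {a b c s : ℝ} (ha : a ≠ 0) (hs : s ^ 2 = b ^ 2 - 4 * a * c) :
    a * ((b + s) / (2 * a)) ^ 2 - b * ((b + s) / (2 * a)) + c = 0 := by
  field_simp
  linear_combination hs

lemma four_mul_lt_mul_add_sqrt_iff {b c : ℝ} (hb : 0 < b) (hc : c ≤ b ^ 2) :
    4 * c < 3 * b * (b + √(b ^ 2 - c)) ↔ 16 * c < 15 * b ^ 2 := by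
  have hs2 : √(b ^ 2 - c) ^ 2 = b ^ 2 - c := sq_sqrt (by linarith)
  have hs0 : 0 ≤ √(b ^ 2 - c) := sqrt_nonneg _
  rcases lt_or_ge (4 * c) (3 * b ^ 2) with hsmall | hlarge
  · constructor <;> intro <;> nlinarith
  · -- both sides of `4c - 3b² < 3b√(b² - c)` are nonnegative, so we may square it
    calc 4 * c < 3 * b * (b + √(b ^ 2 - c))
        ↔ 4 * c - 3 * b ^ 2 < 3 * b * √(b ^ 2 - c) := by constructor <;> intro <;> linarith
      _ ↔ (4 * c - 3 * b ^ 2) ^ 2 < (3 * b * √(b ^ 2 - c)) ^ 2 :=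
          (pow_lt_pow_iff_left₀ (by linarith) (by positivity) two_ne_zero).symm
      _ ↔ 16 * c < 15 * b ^ 2 := by
          rw [mul_pow, hs2]
          constructor <;> intro <;> nlinarith

noncomputable def exportProfit (b a c q : ℝ) : ℝ :=
  5 / 4 * b * q ^ (4 / 5 : ℝ) - a * q - 5 / 3 * c * q ^ (3 / 5 : ℝ)

lemma exportProfit_pow_five_of_root {a b c x : ℝ} (hx : 0 ≤ x)
    (hroot : a * x ^ 2 - b * x + c = 0) :
    exportProfit b a c (x ^ 5) = x ^ 3 * (3 * b * x - 8 * c) / 12 := by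
  rw [exportProfit, rpow_pow_eq_pow_of_mul_eq (m := 4) hx (by norm_num),
    rpow_pow_eq_pow_of_mul_eq (m := 3) hx (by norm_num)]
  linear_combination (-x ^ 3) * hroot

/-- **Export profit at the optimum and the export cutoff without fixed costs.**
With `q_f = ((κ_R + √(κ_R² - 4τ·MC·κ_LT·w))/(2τ·MC))⁵` and profit
`π(q) = (5/4)κ_R q^{4/5} - τ·MC·q - (5/3)wκ_LT q^{3/5}`, the profit at `q_f` equals the
displayed closed form, and it is positive iff `MC < 15κ_R²/(64wτκ_LT)`. -/
theorem stmt12 (κR κLT w τ MC : ℝ) (hκR : 0 < κR) (hκLT : 0 < κLT)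
    (hw : 0 < w) (hτ : 0 < τ) (hMC : 0 < MC)
    (hMCle : MC ≤ κR ^ 2 / (4 * w * τ * κLT))
    (qf : ℝ) (hqf : qf = ((κR + Real.sqrt (κR ^ 2 - 4 * τ * MC * κLT * w)) / (2 * τ * MC)) ^ 5)
    (profit : ℝ → ℝ)
    (hprofit : profit = fun q =>
      (5 / 4) * κR * q ^ ((4 / 5 : ℝ)) - τ * MC * q - (5 / 3) * w * κLT * q ^ ((3 / 5 : ℝ))) :
    profit qf =
      (1 / (192 * MC ^ 4 * τ ^ 4)) *
        (κR + Real.sqrt (κR ^ 2 - 4 * MC * w * τ * κLT)) ^ 3 *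
        (-(16 * MC * w * τ * κLT) +
          3 * κR * (κR + Real.sqrt (κR ^ 2 - 4 * MC * w * τ * κLT))) ∧
    (0 < profit qf ↔ MC < 15 * κR ^ 2 / (64 * w * τ * κLT)) := by
  have hdisc : 4 * (τ * MC) * (w * κLT) ≤ κR ^ 2 := by
    rw [le_div_iff₀ (by positivity)] at hMCle
    linarith
  set s := √(κR ^ 2 - 4 * (τ * MC) * (w * κLT)) with hs
  set x := (κR + s) / (2 * (τ * MC)) with hx
  have hx0 : 0 < x := by positivity
  have hroot : τ * MC * x ^ 2 - κR * x + w * κLT = 0 :=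
    quadratic_larger_root_eq_zero (by positivity) (sq_sqrt (by linarith))
  have hprofit_qf : profit qf = x ^ 3 * (3 * κR * x - 8 * (w * κLT)) / 12 := by
    have hqf_x : qf = x ^ 5 := by rw [hqf, hx, hs]; ring_nf
    rw [hqf_x, ← exportProfit_pow_five_of_root hx0.le hroot, hprofit, exportProfit]
    ring
  have hsqrt : √(κR ^ 2 - 4 * MC * w * τ * κLT) = s := by rw [hs]; ring_nf
  have hsum : κR + s = 2 * (τ * MC) * x := by rw [hx]; field_simp
  refine ⟨?_, ?_⟩
  · rw [hprofit_qf, hsqrt, hsum]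
    field_simp
    ring
  · rw [hprofit_qf, div_pos_iff_of_pos_right (by norm_num), mul_pos_iff_of_pos_left (by positivity),
      sub_pos, lt_div_iff₀ (by positivity)]
    calc 8 * (w * κLT) < 3 * κR * x
        ↔ 4 * (4 * (τ * MC) * (w * κLT)) < 3 * κR * (κR + s) := by
          rw [hsum, ← mul_lt_mul_iff_right₀ (by positivity : 0 < 2 * (τ * MC))]
          constructor <;> intro <;> linarith
      _ ↔ 16 * (4 * (τ * MC) * (w * κLT)) < 15 * κR ^ 2 := four_mul_lt_mul_add_sqrt_iff hκR hdisc
      _ ↔ MC * (64 * w * τ * κLT) < 15 * κR ^ 2 := by constructor <;> intro <;> linarith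
end

section
/- Let a > 0, b > 0, λ > 0 with 1 + λ − b·λ > 0, and let MR(q) = a·q^{−b}. Then for every q > 0 there is a unique h > −1 satisfying MR(q/(1+h)) = ((1+λ)/(λ·q^{1+1/λ}))·∫₀^q x^{1/λ}·MR(x) dx, namely h = ((1+λ)/(1+λ−b·λ))^{1/b} − 1; in particular h does not depend on q. -/
/-- **Constant relative labor hoarding under Bulow–Pfleiderer/constant-elasticity marginal
revenue.**  With `MR(q) = a·q^{-b}`, for every `q > 0` there is a unique `h > -1` with
`MR(q/(1+h)) = ((1+λ)/(λ q^{1+1/λ})) ∫₀^q x^{1/λ} MR(x) dx`, namely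
`h = ((1+λ)/(1+λ-bλ))^{1/b} - 1`, which does not depend on `q`. -/
theorem stmt14 (a b lam : ℝ) (ha : 0 < a) (hb : 0 < b) (hlam : 0 < lam)
    (h1 : 0 < 1 + lam - b * lam)
    (h₀ : ℝ) (hh₀ : h₀ = ((1 + lam) / (1 + lam - b * lam)) ^ ((1 : ℝ) / b) - 1) :
    ∀ q > (0 : ℝ),
      (h₀ > -1 ∧
        a * (q / (1 + h₀)) ^ (-b) =
          ((1 + lam) / (lam * q ^ ((1 + 1 / lam : ℝ)))) *
            ∫ x in (0 : ℝ)..q, x ^ ((1 : ℝ) / lam) * (a * x ^ (-b))) ∧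
      ∀ h > (-1 : ℝ),
        a * (q / (1 + h)) ^ (-b) =
          ((1 + lam) / (lam * q ^ ((1 + 1 / lam : ℝ)))) *
            (∫ x in (0 : ℝ)..q, x ^ ((1 : ℝ) / lam) * (a * x ^ (-b))) →
        h = h₀ := by
  have hbl : (0:ℝ) < 1 + lam := by nlinarith
  set c : ℝ := (1 + lam) / (1 + lam - b * lam) with hc_def
  have hc : 0 < c := div_pos hbl h1
  have hr1 : (0:ℝ) < 1/lam - b + 1 := by
    have h' : 1/lam - b + 1 = (1 + lam - b*lam)/lam := by field_simp; ring
    rw [h']; exact div_pos h1 hlam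
  have hh₀pos : 0 < 1 + h₀ := by
    rw [hh₀]
    have : 0 < c ^ ((1:ℝ)/b) := Real.rpow_pos_of_pos hc _
    linarith
  intro q hq
  have hqpow : (0:ℝ) < q ^ ((1 + 1/lam : ℝ)) := Real.rpow_pos_of_pos hq _
  -- compute the integral
  have hint : (∫ x in (0:ℝ)..q, x ^ ((1:ℝ)/lam) * (a * x ^ (-b)))
      = a * (q ^ ((1:ℝ)/lam - b + 1) / (1/lam - b + 1)) := by
    have h1' : (∫ x in (0:ℝ)..q, x ^ ((1:ℝ)/lam) * (a * x ^ (-b)))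
        = ∫ x in (0:ℝ)..q, a * x ^ ((1:ℝ)/lam - b) := by
      apply intervalIntegral.integral_congr_ae
      filter_upwards with x hx
      rw [Set.uIoc_of_le hq.le] at hx
      rw [show (1:ℝ)/lam - b = 1/lam + (-b) by ring, Real.rpow_add hx.1]
      ring
    rw [h1', intervalIntegral.integral_const_mul,
      integral_rpow (Or.inl (by linarith)), Real.zero_rpow (by linarith)]
    ring
  -- value of the RHS
  have hRHS : ((1 + lam) / (lam * q ^ ((1 + 1 / lam : ℝ)))) *
      (∫ x in (0:ℝ)..q, x ^ ((1:ℝ)/lam) * (a * x ^ (-b))) = a * c * q ^ (-b) := by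
    rw [hint]
    have hq1 : q ^ ((1:ℝ)/lam - b + 1) = q ^ ((1 + 1/lam : ℝ)) * q ^ (-b) := by
      rw [← Real.rpow_add hq]; ring_nf
    have hl : lam * (1/lam - b + 1) = 1 + lam - b * lam := by field_simp; ring
    have hc2 : c = (1 + lam) / (lam * (1/lam - b + 1)) := by rw [hc_def, ← hl]
    have alg : ∀ Q p s L A : ℝ, Q ≠ 0 → s ≠ 0 → L ≠ 0 →
        (1 + lam) / (L * Q) * (A * (Q * p / s)) = A * ((1 + lam) / (L * s)) * p := by
      intro Q p s L A hQ hs hL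
      field_simp
    rw [hq1, hc2]
    exact alg _ _ _ _ _ hqpow.ne' hr1.ne' hlam.ne'
  -- equation ⟺ (1+h)^b = c, for 1+h > 0
  have key : ∀ t : ℝ, 0 < t →
      (a * (q / t) ^ (-b) = a * c * q ^ (-b) ↔ t ^ b = c) := by
    intro t ht
    have hqb : (0:ℝ) < q ^ (-b) := Real.rpow_pos_of_pos hq _
    have hd : (q / t) ^ (-b) = q ^ (-b) * t ^ b := by
      rw [Real.div_rpow hq.le ht.le, Real.rpow_neg ht.le]
      field_simp
    rw [hd]
    constructor
    · intro hEq
      rw [show a * c * q ^ (-b) = a * (q ^ (-b) * c) by ring] at hEq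
      exact mul_left_cancel₀ hqb.ne' (mul_left_cancel₀ ha.ne' hEq)
    · intro hEq; rw [hEq]; ring
  refine ⟨⟨by linarith, ?_⟩, ?_⟩
  · rw [hRHS, key _ hh₀pos]
    rw [hh₀]
    have : 1 + (c ^ ((1:ℝ)/b) - 1) = c ^ b⁻¹ := by rw [one_div]; ring
    rw [this, Real.rpow_inv_rpow hc.le hb.ne']
  · intro h hh hEq
    rw [hRHS] at hEq
    have ht : 0 < 1 + h := by linarith
    have hpow : (1 + h) ^ b = c := (key _ ht).mp hEq
    have : 1 + h = c ^ ((1:ℝ)/b) := by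
      rw [← hpow, one_div, Real.rpow_rpow_inv ht.le hb.ne']
    rw [hh₀]
    linarith
end

section
/- Let α > 0 and define Q : (0,∞) → ℝ by Q(p) = e^{−p^α}. Then for every p > 0 the curvature κ(p) := Q″(p)·Q(p)/Q′(p)² equals 1 + (1 − α)/(α·p^α). Consequently: (i) if α > 1, then κ is strictly increasing on (0,∞) and κ(p) < 1 for all p > 0; (ii) if 0 < α < 1, then κ(p) → +∞ as p → 0⁺, so κ(p) > 2 for all sufficiently small p > 0. -/
open Filter

/-- Weibull demand `Q(p) = e^{-p^α}`. -/
noncomputable def Qweibull (α : ℝ) (p : ℝ) : ℝ := Real.exp (-(p ^ α))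

/-- Curvature of Weibull demand: `κ(p) = Q''(p)·Q(p)/Q'(p)²`. -/
noncomputable def κweibull (α : ℝ) (p : ℝ) : ℝ :=
  deriv (deriv (Qweibull α)) p * Qweibull α p / (deriv (Qweibull α) p) ^ 2

/-!
Writing `Q = e^{-g}` gives `Q' = -g' Q` and `Q'' = (g'² - g'') Q`, so the curvature of `Q` is
`1 - g''/g'²`. For `g(p) = p^α` this is `1 + ((1 - α)/α) p^{-α}`; since `p^{-α}` is positive,
strictly decreasing and tends to `∞` at `0⁺`, the sign of `1 - α` decides everything.
-/

open Real Topology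

section ExpNeg

variable {g g' : ℝ → ℝ} {g'' p : ℝ}

lemma deriv_exp_neg_eventuallyEq (hg : ∀ᶠ x in 𝓝 p, HasDerivAt g (g' x) x) :
    deriv (fun x => exp (-g x)) =ᶠ[𝓝 p] fun x => -g' x * exp (-g x) := by
  filter_upwards [hg] with x hx
  have hexp : HasDerivAt (fun x => exp (-g x)) (exp (-g x) * -g' x) x := hx.neg.exp
  rw [hexp.deriv]
  ring

lemma deriv_deriv_exp_neg (hg : ∀ᶠ x in 𝓝 p, HasDerivAt g (g' x) x)
    (hg' : HasDerivAt g' g'' p) :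
    deriv (deriv fun x => exp (-g x)) p = (g' p ^ 2 - g'') * exp (-g p) := by
  have hprod : HasDerivAt (fun x => -g' x * exp (-g x))
      (-g'' * exp (-g p) + -g' p * (exp (-g p) * -g' p)) p :=
    hg'.neg.mul hg.self_of_nhds.neg.exp
  rw [(deriv_exp_neg_eventuallyEq hg).deriv_eq, hprod.deriv]
  ring

lemma curvature_exp_neg (hg : ∀ᶠ x in 𝓝 p, HasDerivAt g (g' x) x)
    (hg' : HasDerivAt g' g'' p) (hg'p : g' p ≠ 0) :
    deriv (deriv fun x => exp (-g x)) p * exp (-g p) / deriv (fun x => exp (-g x)) p ^ 2 =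
      1 - g'' / g' p ^ 2 := by
  rw [deriv_deriv_exp_neg hg hg', (deriv_exp_neg_eventuallyEq hg).eq_of_nhds]
  field_simp

end ExpNeg

variable {α p : ℝ}

lemma κweibull_eq (hα : α ≠ 0) (hp : 0 < p) :
    κweibull α p = 1 + (1 - α) / (α * p ^ α) := by
  have hg : ∀ᶠ x in 𝓝 p, HasDerivAt (· ^ α) (α * x ^ (α - 1)) x := by
    filter_upwards [lt_mem_nhds hp] with x hx
    exact hasDerivAt_rpow_const (Or.inl hx.ne')
  have hg' : HasDerivAt (fun x => α * x ^ (α - 1)) (α * ((α - 1) * p ^ (α - 1 - 1))) p :=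
    (hasDerivAt_rpow_const (Or.inl hp.ne')).const_mul α
  have hκ : κweibull α p = 1 - α * ((α - 1) * p ^ (α - 1 - 1)) / (α * p ^ (α - 1)) ^ 2 :=
    curvature_exp_neg hg hg' (mul_ne_zero hα (rpow_pos_of_pos hp _).ne')
  rw [hκ, rpow_sub_one hp.ne', rpow_sub_one hp.ne']
  field_simp
  ring

lemma κweibull_eq_one_add_mul_rpow_neg (hα : α ≠ 0) (hp : 0 < p) :
    κweibull α p = 1 + (1 - α) / α * p ^ (-α) := by
  rw [κweibull_eq hα hp, rpow_neg hp.le]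
  field_simp

lemma κweibull_lt_one (hα : 1 < α) (hp : 0 < p) : κweibull α p < 1 := by
  rw [κweibull_eq (by positivity) hp]
  have : (1 - α) / (α * p ^ α) < 0 := div_neg_of_neg_of_pos (by linarith) (by positivity)
  linarith

lemma strictMonoOn_κweibull (hα : 1 < α) : StrictMonoOn (κweibull α) (Set.Ioi 0) := by
  intro p hp q hq hpq
  rw [κweibull_eq_one_add_mul_rpow_neg (by positivity) hp,
    κweibull_eq_one_add_mul_rpow_neg (by positivity) hq]
  have hneg : (1 - α) / α < 0 := div_neg_of_neg_of_pos (by linarith) (by positivity)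
  have hpow : q ^ (-α) < p ^ (-α) := rpow_lt_rpow_of_neg hp hpq (by linarith)
  nlinarith

lemma tendsto_κweibull_nhdsGT_zero (hα : 0 < α) (hα1 : α < 1) :
    Tendsto (κweibull α) (𝓝[>] 0) atTop := by
  have hlim : Tendsto (fun p => 1 + (1 - α) / α * p ^ (-α)) (𝓝[>] 0) atTop :=
    tendsto_atTop_add_const_left _ 1 <|
      (tendsto_rpow_neg_nhdsGT_zero (neg_lt_zero.2 hα)).const_mul_atTop
        (div_pos (by linarith) hα)
  refine hlim.congr' ?_
  filter_upwards [self_mem_nhdsWithin] with p hp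
  exact (κweibull_eq_one_add_mul_rpow_neg hα.ne' hp).symm

/-- **Curvature of Weibull demand.**  For `α > 0` and `p > 0`,
`κ(p) = 1 + (1-α)/(α·p^α)`.  (i) If `α > 1`, `κ` is strictly increasing on `(0,∞)` and
everywhere `< 1` there; (ii) if `α < 1`, `κ(p) → +∞` as `p → 0⁺`, so `κ(p) > 2` for all
sufficiently small `p > 0`. -/
theorem stmt18 (α : ℝ) (hα : 0 < α) :
    (∀ p > (0 : ℝ), κweibull α p = 1 + (1 - α) / (α * p ^ α)) ∧
    (1 < α → StrictMonoOn (κweibull α) (Set.Ioi 0) ∧ ∀ p > (0 : ℝ), κweibull α p < 1) ∧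
    (α < 1 → Tendsto (κweibull α) (nhdsWithin 0 (Set.Ioi 0)) atTop ∧
      ∃ δ > (0 : ℝ), ∀ p ∈ Set.Ioo (0 : ℝ) δ, 2 < κweibull α p) := by
  refine ⟨fun p hp => κweibull_eq hα.ne' hp,
    fun hα1 => ⟨strictMonoOn_κweibull hα1, fun p hp => κweibull_lt_one hα1 hp⟩,
    fun hα1 => ⟨tendsto_κweibull_nhdsGT_zero hα hα1, ?_⟩⟩
  exact mem_nhdsGT_iff_exists_Ioo_subset.1
    ((tendsto_κweibull_nhdsGT_zero hα hα1).eventually_gt_atTop 2)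
end

section
/- Let a ∈ ℝ and b < 0, and define Q(p) = (a + b·log p)/p for p in the interval (0, e^{−a/b}), on which a + b·log p > 0. Then for every p ∈ (0, e^{−a/b}), the curvature κ(p) := Q″(p)·Q(p)/Q′(p)² equals 2 + b·(a − 2b + b·log p)/(a − b + b·log p)², and κ is strictly decreasing on (0, e^{−a/b}). -/
/-- Single-product AIDS demand `Q(p) = (a + b·log p)/p`. -/
noncomputable def Qaids (a b : ℝ) (p : ℝ) : ℝ := (a + b * Real.log p) / p

/-- Curvature of AIDS demand: `κ(p) = Q''(p)·Q(p)/Q'(p)²`. -/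
noncomputable def κaids (a b : ℝ) (p : ℝ) : ℝ :=
  deriv (deriv (Qaids a b)) p * Qaids a b p / (deriv (Qaids a b) p) ^ 2

/-!
On the interval, `x = a - b + b·log p` is positive and decreasing in `p`, and the curvature is
`2 + b(x - b)/x² = 2 + t - t²` with `t = b/x < 0`. As `p` grows, `x` falls, so `t` falls, and
`t ↦ t - t²` is increasing for `t < 1/2`; hence the curvature decreases.
-/

open Real Set

section Derivatives

variable (a b : ℝ) {p : ℝ}

lemma hasDerivAt_const_add_mul_log (c : ℝ) (hp : 0 < p) :
    HasDerivAt (fun x => c + b * log x) (b / p) p := by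
  simpa [div_eq_mul_inv] using ((hasDerivAt_log hp.ne').const_mul b).const_add c

lemma hasDerivAt_Qaids (hp : 0 < p) :
    HasDerivAt (Qaids a b) ((b - a - b * log p) / p ^ 2) p := by
  refine ((hasDerivAt_const_add_mul_log b a hp).div (hasDerivAt_id' p) hp.ne').congr_deriv ?_
  field_simp
  ring

lemma deriv_Qaids (hp : 0 < p) : deriv (Qaids a b) p = (b - a - b * log p) / p ^ 2 :=
  (hasDerivAt_Qaids a b hp).deriv

lemma deriv_deriv_Qaids (hp : 0 < p) :
    deriv (deriv (Qaids a b)) p = (2 * a - 3 * b + 2 * b * log p) / p ^ 3 := by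
  have h_eventually : deriv (Qaids a b) =ᶠ[nhds p] fun x => (b - a + -b * log x) / x ^ 2 := by
    filter_upwards [lt_mem_nhds hp] with x hx
    rw [deriv_Qaids a b hx]
    ring
  have h_deriv := (hasDerivAt_const_add_mul_log (-b) (b - a) hp).div
    (hasDerivAt_pow 2 p) (pow_ne_zero 2 hp.ne')
  rw [h_eventually.deriv_eq]
  refine h_deriv.deriv.trans ?_
  field_simp
  ring

lemma κaids_eq (hp : 0 < p) (hx : a - b + b * log p ≠ 0) :
    κaids a b p = 2 + b * (a - 2 * b + b * log p) / (a - b + b * log p) ^ 2 := by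
  have hx' : b - a - b * log p ≠ 0 := fun h => hx (by linarith)
  rw [κaids, deriv_Qaids a b hp, deriv_deriv_Qaids a b hp, Qaids]
  field_simp
  ring

end Derivatives

lemma strictAntiOn_const_add_mul_log {b : ℝ} (c : ℝ) (hb : b < 0) :
    StrictAntiOn (fun p => c + b * log p) (Ioi 0) := fun _ hp _ _ hpq => by
  simpa using mul_lt_mul_of_neg_left (log_lt_log hp hpq) hb

lemma add_mul_log_pos {a b p : ℝ} (hb : b < 0) (hp : p ∈ Ioo 0 (exp (-a / b))) :
    0 < a + b * log p := by
  have h_log : log p < -a / b := by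
    simpa using log_lt_log hp.1 hp.2
  linarith [(lt_div_iff_of_neg hb).1 h_log]

lemma strictMonoOn_curvature_profile {b : ℝ} (hb : b < 0) :
    StrictMonoOn (fun x => 2 + b * (x - b) / x ^ 2) (Ioi 0) := by
  intro y (hy : 0 < y) x (hx : 0 < x) hyx
  have h_profile : ∀ z : ℝ, z ≠ 0 → b * (z - b) / z ^ 2 = b / z - (b / z) ^ 2 := by
    intro z hz
    field_simp
  have h_t : b / y < b / x := by
    rw [div_lt_div_iff₀ hy hx]
    nlinarith
  have h_t_neg : b / x < 0 := div_neg_of_neg_of_pos hb hx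
  simp only [h_profile x hx.ne', h_profile y hy.ne']
  nlinarith

/-- **Curvature of AIDS demand with `b < 0`.**  On `(0, e^{-a/b})` one has
`a + b·log p > 0`, the curvature equals `2 + b(a - 2b + b·log p)/(a - b + b·log p)²`,
and it is strictly decreasing in price. -/
theorem stmt19 (a b : ℝ) (hb : b < 0) :
    (∀ p ∈ Set.Ioo (0 : ℝ) (Real.exp (-a / b)), 0 < a + b * Real.log p) ∧
    (∀ p ∈ Set.Ioo (0 : ℝ) (Real.exp (-a / b)),
      κaids a b p =
        2 + b * (a - 2 * b + b * Real.log p) / (a - b + b * Real.log p) ^ 2) ∧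
    StrictAntiOn (κaids a b) (Set.Ioo (0 : ℝ) (Real.exp (-a / b))) := by
  have h_shifted_pos : ∀ p ∈ Ioo 0 (exp (-a / b)), 0 < a - b + b * log p := fun p hp => by
    linarith [add_mul_log_pos hb hp]
  have h_formula : ∀ p ∈ Ioo 0 (exp (-a / b)),
      κaids a b p = 2 + b * (a - 2 * b + b * log p) / (a - b + b * log p) ^ 2 :=
    fun p hp => κaids_eq a b hp.1 (h_shifted_pos p hp).ne'
  refine ⟨fun p hp => add_mul_log_pos hb hp, h_formula, ?_⟩
  have h_comp := (strictMonoOn_curvature_profile hb).comp_strictAntiOn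
    ((strictAntiOn_const_add_mul_log (a - b) hb).mono Ioo_subset_Ioi_self) h_shifted_pos
  refine h_comp.congr fun p hp => ?_
  simp only [Function.comp_apply, h_formula p hp]
  ring
end
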